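/- Under the hypotheses of the coercivity lemma, if additionally ‖F(u)‖ ≤ C_loss · L(u)^{1/2} for a nonnegative loss functional L, then for any e with ‖e‖ ≤ min(r, α/(2L)), ‖e‖ ≤ (2 C_loss/α) · L(u* + e)^{1/2}. -/

import Mathlib

open RealInnerProductSpace

/-
Coercivity gives `α ‖e‖ ≤ ‖A e‖`, and the quadratic remainder costs at most `L ‖e‖² ≤ α ‖e‖ / 2`
when `L ‖e‖ ≤ α / 2`, so the residual satisfies `‖F (u* + e)‖ ≥ α ‖e‖ / 2`; the loss bound
`‖F u‖ ≤ C_loss √(Loss u)` then converts this into the claimed error bound.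
-/

theorem mul_norm_le_norm_of_mul_sq_le_inner {X : Type*} [NormedAddCommGroup X]
    [InnerProductSpace ℝ X] {α : ℝ} {v w : X} (h : α * ‖w‖ ^ 2 ≤ ⟪v, w⟫) :
    α * ‖w‖ ≤ ‖v‖ := by
  rcases (norm_nonneg w).eq_or_lt with hw | hw
  · rw [← hw, mul_zero]
    exact norm_nonneg v
  · refine le_of_mul_le_mul_right ?_ hw
    calc α * ‖w‖ * ‖w‖ = α * ‖w‖ ^ 2 := by ring
      _ ≤ ⟪v, w⟫ := h
      _ ≤ ‖v‖ * ‖w‖ := real_inner_le_norm v w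

theorem residual_to_error_bound_general
    {X : Type*} [NormedAddCommGroup X] [InnerProductSpace ℝ X]
    (F : X → X) (uStar : X) (A : X →L[ℝ] X)
    (α L r Closs : ℝ) (hα : 0 < α)
    (Loss : X → ℝ)
    (hcoer : ∀ w : X, α * ‖w‖ ^ 2 ≤ inner ℝ (A w) w)
    (hrem : ∀ w : X, ‖w‖ ≤ r → ‖F (uStar + w) - A w‖ ≤ L * ‖w‖ ^ 2)
    (hloss : ∀ u : X, ‖F u‖ ≤ Closs * Real.sqrt (Loss u)) :
    ∀ e : X, ‖e‖ ≤ r → L * ‖e‖ ≤ α / 2 →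
      ‖e‖ ≤ (2 * Closs / α) * Real.sqrt (Loss (uStar + e)) := by
  intro e her hel
  have hremainder : L * ‖e‖ ^ 2 ≤ α / 2 * ‖e‖ := by
    rw [sq, ← mul_assoc]
    exact mul_le_mul_of_nonneg_right hel (norm_nonneg e)
  have hresidual : α / 2 * ‖e‖ ≤ ‖F (uStar + e)‖ :=
    calc α / 2 * ‖e‖ = α * ‖e‖ - α / 2 * ‖e‖ := by ring
      _ ≤ ‖A e‖ - ‖F (uStar + e) - A e‖ := by
        gcongr
        · exact mul_norm_le_norm_of_mul_sq_le_inner (hcoer e)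
        · exact (hrem e her).trans hremainder
      _ ≤ ‖F (uStar + e)‖ := by
        linarith [norm_le_norm_add_norm_sub (F (uStar + e)) (A e)]
  rw [div_mul_eq_mul_div, le_div_iff₀ hα]
  linarith [hresidual.trans (hloss (uStar + e))]

/-- Residual-to-error bound: under the coercivity-lemma hypotheses, if in
addition `‖F u‖ ≤ C_loss √(Loss u)` for a nonnegative loss functional `Loss`,
then `‖e‖ ≤ (2 C_loss / α) √(Loss (uStar + e))` for `‖e‖ ≤ min(r, α/(2L))`. -/
theorem residual_to_error_bound
    {X : Type*} [NormedAddCommGroup X] [InnerProductSpace ℝ X] [CompleteSpace X]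
    (F : X → X) (uStar : X) (A : X →L[ℝ] X)
    (α L r Closs : ℝ) (hα : 0 < α) (hL : 0 ≤ L) (hC : 0 < Closs)
    (Loss : X → ℝ) (hLoss0 : ∀ u, 0 ≤ Loss u)
    (hF0 : F uStar = 0)
    (hcoer : ∀ w : X, α * ‖w‖ ^ 2 ≤ inner ℝ (A w) w)
    (hrem : ∀ w : X, ‖w‖ ≤ r → ‖F (uStar + w) - A w‖ ≤ L * ‖w‖ ^ 2)
    (hloss : ∀ u : X, ‖F u‖ ≤ Closs * Real.sqrt (Loss u)) :
    ∀ e : X, ‖e‖ ≤ r → L * ‖e‖ ≤ α / 2 →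
      ‖e‖ ≤ (2 * Closs / α) * Real.sqrt (Loss (uStar + e)) :=
  residual_to_error_bound_general F uStar A α L r Closs hα Loss hcoer hrem hloss
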